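/- If γ = (A B; C D) is an integral symplectic matrix congruent to the identity modulo 2m, then diag(ᵗAC) ≡ diag(C) (mod 4m) and diag(ᵗBD) ≡ diag(B) (mod 4m). -/
import Mathlib


open Matrix

/-- If γ = (A B; C D) is an integral symplectic matrix congruent to the identity
modulo 2m, then diag(ᵗAC) ≡ diag(C) (mod 4m) and diag(ᵗBD) ≡ diag(B) (mod 4m). -/
theorem diag_congruences_of_principal_congruence (g m : ℕ) (hm : 1 ≤ m)
    (A B C D : Matrix (Fin g) (Fin g) ℤ)
    (hsymp : Matrix.fromBlocks A B C D ∈ Matrix.symplecticGroup (Fin g) ℤ)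
    (hcong : ∀ i j, ((2 * m : ℕ) : ℤ) ∣
      (Matrix.fromBlocks A B C D i j - (1 : Matrix (Fin g ⊕ Fin g) (Fin g ⊕ Fin g) ℤ) i j)) :
    (∀ i, ((4 * m : ℕ) : ℤ) ∣ ((Aᵀ * C) i i - C i i)) ∧
    (∀ i, ((4 * m : ℕ) : ℤ) ∣ ((Bᵀ * D) i i - B i i)) := by
  have hA : ∀ i j, i ≠ j → ((2 * m : ℕ) : ℤ) ∣ A i j := fun i j h => by
    have := hcong (Sum.inl i) (Sum.inl j)
    simpa [Matrix.one_apply, h] using this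
  have hA' : ∀ i, ((2 * m : ℕ) : ℤ) ∣ A i i - 1 := fun i => by
    have := hcong (Sum.inl i) (Sum.inl i)
    simpa [Matrix.one_apply] using this
  have hB : ∀ i j, ((2 * m : ℕ) : ℤ) ∣ B i j := fun i j => by
    have := hcong (Sum.inl i) (Sum.inr j)
    simpa [Matrix.one_apply] using this
  have hC : ∀ i j, ((2 * m : ℕ) : ℤ) ∣ C i j := fun i j => by
    have := hcong (Sum.inr i) (Sum.inl j)
    simpa [Matrix.one_apply] using this
  have hD : ∀ i j, i ≠ j → ((2 * m : ℕ) : ℤ) ∣ D i j := fun i j h => by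
    have := hcong (Sum.inr i) (Sum.inr j)
    simpa [Matrix.one_apply, h] using this
  have hD' : ∀ i, ((2 * m : ℕ) : ℤ) ∣ D i i - 1 := fun i => by
    have := hcong (Sum.inr i) (Sum.inr i)
    simpa [Matrix.one_apply] using this
  have key : ∀ x y : ℤ, ((2 * m : ℕ) : ℤ) ∣ x → ((2 * m : ℕ) : ℤ) ∣ y →
      ((4 * m : ℕ) : ℤ) ∣ x * y := by
    rintro x y ⟨a, rfl⟩ ⟨b, rfl⟩
    exact ⟨(m : ℤ) * a * b, by push_cast; ring⟩
  constructor
  · intro i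
    have heq : (Aᵀ * C) i i - C i i
        = ∑ k, (A k i * C k i - if k = i then C i i else 0) := by
      rw [Matrix.mul_apply, Finset.sum_sub_distrib, Finset.sum_ite_eq' Finset.univ i]
      simp [Matrix.transpose_apply]
    rw [heq]
    refine Finset.dvd_sum fun k _ => ?_
    by_cases h : k = i
    · subst h
      simp only [if_true]
      have : A k k * C k k - C k k = (A k k - 1) * C k k := by ring
      rw [this]
      exact key _ _ (hA' k) (hC k k)
    · simp only [if_neg h, sub_zero]
      exact key _ _ (hA k i h) (hC k i)
  · intro i
    have heq : (Bᵀ * D) i i - B i i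
        = ∑ k, (B k i * D k i - if k = i then B i i else 0) := by
      rw [Matrix.mul_apply, Finset.sum_sub_distrib, Finset.sum_ite_eq' Finset.univ i]
      simp [Matrix.transpose_apply]
    rw [heq]
    refine Finset.dvd_sum fun k _ => ?_
    by_cases h : k = i
    · subst h
      simp only [if_true]
      have : B k k * D k k - B k k = B k k * (D k k - 1) := by ring
      rw [this]
      exact key _ _ (hB k k) (hD' k)
    · simp only [if_neg h, sub_zero]
      exact key _ _ (hB k i) (hD k i h)
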